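/- For every integer d ≥ 3, the tree T(4,d) satisfies α_e(T(4,d)) ≥ (2/3^3)·(n(T(4,d)) + 1), where n(T(4,d)) = 2·3^d − 1 (so the bound equals (2/27)·2·3^d). -/

import Mathlib

open SimpleGraph
open scoped Classical

/-- The graph obtained from `G` by deleting the vertices of `A`
(they are kept as isolated vertices, which does not affect adjacency or distances
among the remaining vertices). -/
def SimpleGraph.deleteSet {V : Type*} (G : SimpleGraph V) (A : Set V) : SimpleGraph V where
  Adj x y := G.Adj x y ∧ x ∉ A ∧ y ∉ A
  symm := ⟨fun _ _ ⟨h, hx, hy⟩ => ⟨h.symm, hy, hx⟩⟩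
  loopless := ⟨fun x ⟨h, _, _⟩ => G.loopless.irrefl x h⟩

/-- `dist_{(G,S)}(u,v)`: the distance between `u` and `v` in `G - (S \ {u,v})`,
with value `⊤` if `u` and `v` lie in different components of that graph. -/
noncomputable def distDel {V : Type*} (G : SimpleGraph V) (S : Set V) (u v : V) : ℕ∞ :=
  (G.deleteSet (S \ {u, v})).edist u v

/-- `w_{(G,S)}(u) = Σ_{v ∈ S} (1/2)^{dist_{(G,S)}(u,v) - 1}` for a finite set `S`,
where a summand with infinite distance equals `0`. -/
noncomputable def expW {V : Type*} (G : SimpleGraph V) (S : Finset V) (u : V) : ℝ :=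
  ∑ v ∈ S, if distDel G (↑S) u v = ⊤ then 0
    else 2 * (1 / 2 : ℝ) ^ (distDel G (↑S) u v).toNat

/-- `S` is exponentially independent in `G`: `w_{(G,S∖{u})}(u) < 1` for every `u ∈ S`. -/
def ExpIndep {V : Type*} (G : SimpleGraph V) (S : Finset V) : Prop :=
  ∀ u ∈ S, expW G (S.erase u) u < 1

/-- The exponential independence number of `G`: the maximum cardinality of an
exponentially independent set in `G`. -/
noncomputable def expIndepNum (V : Type*) [Fintype V] (G : SimpleGraph V) : ℕ :=
  sSup {m : ℕ | ∃ S : Finset V, ExpIndep G S ∧ S.card = m}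

/-- `G` is (isomorphic to) the tree `T(Δ,d)` with root `r`: a finite tree in which every
leaf is at distance exactly `d` from `r` and every non-leaf vertex has degree `Δ`. -/
def IsTreeTDelta {V : Type*} (G : SimpleGraph V) (r : V) (Δ d : ℕ) : Prop :=
  G.Connected ∧ G.IsAcyclic ∧
  (∀ v : V, (G.neighborSet v).ncard = 1 → G.edist r v = (d : ℕ∞)) ∧
  (∀ v : V, (G.neighborSet v).ncard ≠ 1 → (G.neighborSet v).ncard = Δ)

/-!
Pick one grandchild of every vertex at depth `d - 2`; these `4 · 3^(d-3) = (2/27)(n + 1)`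
leaves form an exponentially independent set. If the lowest common ancestor of two selected
leaves lies `m` levels above them, then `m ≥ 3`, their distance is at least `2m - 1`, and their
grandparents lie `m - 2` levels below that ancestor, so at most `4 · 3^(m-3)` selected leaves
meet a given one at height `m`. Deleting vertices only lengthens distances, hence the weight of
a selected leaf is at most `∑_{m ≥ 3} 4 · 3^(m-3) · 2^(2-2m) = ∑_j (1/4)(3/4)^j < 1`.
-/

open Finset

namespace SimpleGraph

variable {V : Type*} {G : SimpleGraph V}

lemma Walk.dist_add_dist_le_length {u v w : V} (p : G.Walk u v) (hw : w ∈ p.support) :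
    G.dist u w + G.dist w v ≤ p.length := by
  rw [← p.take_spec hw, length_append]
  exact add_le_add (dist_le _) (dist_le _)

noncomputable def treeParent (G : SimpleGraph V) (r x : V) : V :=
  if h : ∃ y, G.Adj x y ∧ G.dist r y + 1 = G.dist r x then h.choose else r

@[simp]
lemma treeParent_root (r : V) : treeParent G r r = r := by
  rw [treeParent, dif_neg]
  rintro ⟨y, -, h⟩
  simp at h

noncomputable def meetHeight (G : SimpleGraph V) (r u v : V) : ℕ :=
  sInf {k | (treeParent G r)^[k] u = (treeParent G r)^[k] v}

namespace IsTree

variable (hG : G.IsTree) (r : V) {x y : V}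
include hG

lemma exists_adj_dist_add_one_eq (hx : x ≠ r) :
    ∃ y, G.Adj x y ∧ G.dist r y + 1 = G.dist r x := by
  obtain ⟨p, hp⟩ := hG.connected.exists_walk_length_eq_dist r x
  have hnil : ¬ p.Nil := fun h => hx h.eq.symm
  refine ⟨p.penultimate, (p.adj_penultimate hnil).symm, ?_⟩
  have := dist_le p.dropLast
  rw [Walk.length_dropLast] at this
  rcases hG.dist_eq_dist_add_one_of_adj r (p.adj_penultimate hnil) with h | h <;> omega

lemma adj_treeParent (hx : x ≠ r) :
    G.Adj x (treeParent G r x) ∧ G.dist r (treeParent G r x) + 1 = G.dist r x := by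
  have h := hG.exists_adj_dist_add_one_eq r hx
  rw [treeParent, dif_pos h]
  exact h.choose_spec

lemma eq_penultimate_of_adj {p : G.Walk r x} (hp : p.IsPath) (h : G.Adj x y)
    (hd : G.dist r y < G.dist r x) : y = p.penultimate := by
  refine hG.isAcyclic.eq_penultimate_of_adj_end hp h ?_
  by_contra hy
  obtain ⟨q, hq, hqy⟩ := hG.connected.exists_path_of_dist r y
  have := q.dist_add_dist_le_length
    (hG.isAcyclic.mem_support_of_ne_mem_support_of_adj_of_isPath hq hp h.symm hy)
  omega

lemma treeParent_eq (h : G.Adj x y) (hd : G.dist r y + 1 = G.dist r x) :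
    treeParent G r x = y := by
  have hx : x ≠ r := by rintro rfl; simp at hd
  obtain ⟨p, hp, -⟩ := hG.connected.exists_path_of_dist r x
  obtain ⟨hadj, hdist⟩ := hG.adj_treeParent r hx
  rw [hG.eq_penultimate_of_adj r hp hadj (by omega), hG.eq_penultimate_of_adj r hp h (by omega)]

lemma dist_treeParent (x : V) : G.dist r (treeParent G r x) = G.dist r x - 1 := by
  rcases eq_or_ne x r with rfl | hx
  · simp
  · have := (hG.adj_treeParent r hx).2
    omega

lemma dist_iterate_treeParent (k : ℕ) (x : V) :
    G.dist r ((treeParent G r)^[k] x) = G.dist r x - k := by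
  induction k with
  | zero => rfl
  | succ k ih => rw [Function.iterate_succ_apply', hG.dist_treeParent, ih]; omega

lemma iterate_treeParent_of_dist_le {k : ℕ} (hk : G.dist r x ≤ k) :
    (treeParent G r)^[k] x = r := by
  have := hG.dist_iterate_treeParent r k x
  rw [Nat.sub_eq_zero_of_le hk, hG.connected.dist_eq_zero_iff] at this
  exact this.symm

lemma eq_treeParent_or_eq_treeParent (h : G.Adj x y) :
    y = treeParent G r x ∨ x = treeParent G r y := by
  rcases hG.dist_eq_dist_add_one_of_adj r h with hd | hd
  · exact Or.inl (hG.treeParent_eq r h hd.symm).symm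
  · exact Or.inr (hG.treeParent_eq r h.symm hd.symm).symm

/-- Along any edge one endpoint is the parent of the other, so a walk of length at most
`kx + ky` from `x` to `y` cannot leave the subtree of the common ancestor. -/
lemma iterate_treeParent_eq_of_walk {x y : V} (p : G.Walk x y) {kx ky : ℕ}
    (hk : G.dist r x + ky = G.dist r y + kx) (hp : p.length ≤ kx + ky) :
    (treeParent G r)^[kx] x = (treeParent G r)^[ky] y := by
  induction p generalizing kx with
  | nil =>
    obtain rfl : kx = ky := by omega
    rfl
  | @cons a b c h q ih =>
    rw [Walk.length_cons] at hp
    have hab := hG.dist_eq_dist_add_one_of_adj r h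
    rcases hG.eq_treeParent_or_eq_treeParent r h with hb | ha
    · have hdb := hG.dist_treeParent r a
      rw [← hb] at hdb
      obtain _ | kx := kx
      · have hq := dist_le q
        have := hG.connected.dist_triangle (u := r) (v := b) (w := c)
        omega
      · rw [Function.iterate_succ_apply, ← hb]
        exact ih (by omega) (by omega)
    · have hda := hG.dist_treeParent r b
      rw [← ha] at hda
      rw [← ih (kx := kx + 1) (by omega) (by omega), Function.iterate_succ_apply, ← ha]

lemma le_dist_of_iterate_treeParent_ne {k : ℕ} (hxy : G.dist r x = G.dist r y)
    (hne : (treeParent G r)^[k] x ≠ (treeParent G r)^[k] y) : 2 * k + 1 ≤ G.dist x y := by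
  by_contra! hlt
  obtain ⟨p, hp⟩ := hG.connected.exists_walk_length_eq_dist x y
  exact hne (hG.iterate_treeParent_eq_of_walk r p (by omega) (by omega))

section Meet

variable {u v : V} (huv : G.dist r u = G.dist r v)
include huv

lemma iterate_treeParent_dist_eq :
    (treeParent G r)^[G.dist r u] u = (treeParent G r)^[G.dist r u] v :=
  (hG.iterate_treeParent_of_dist_le r le_rfl).trans (hG.iterate_treeParent_of_dist_le r huv.ge).symm

lemma meetHeight_le : meetHeight G r u v ≤ G.dist r u :=
  Nat.sInf_le (hG.iterate_treeParent_dist_eq r huv)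

lemma iterate_treeParent_eq_of_meetHeight_le {k : ℕ} (hk : meetHeight G r u v ≤ k) :
    (treeParent G r)^[k] u = (treeParent G r)^[k] v := by
  obtain ⟨j, rfl⟩ := Nat.exists_eq_add_of_le hk
  have hmeet : (treeParent G r)^[meetHeight G r u v] u = (treeParent G r)^[meetHeight G r u v] v :=
    Nat.sInf_mem (s := {k | (treeParent G r)^[k] u = (treeParent G r)^[k] v})
      ⟨_, hG.iterate_treeParent_dist_eq r huv⟩
  rw [add_comm, Function.iterate_add_apply, Function.iterate_add_apply, hmeet]

lemma two_mul_meetHeight_le : 2 * meetHeight G r u v ≤ G.dist u v + 1 := by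
  rcases Nat.eq_zero_or_pos (meetHeight G r u v) with h | h
  · omega
  · have := hG.le_dist_of_iterate_treeParent_ne r huv
      (Nat.notMem_of_lt_sInf (Nat.sub_lt h one_pos) : meetHeight G r u v - 1 ∉ _)
    omega

end Meet

end IsTree

section Finite

variable [Fintype V]

noncomputable def treeChildren (G : SimpleGraph V) (r x : V) : Finset V :=
  (G.neighborFinset x).erase (treeParent G r x)

noncomputable def descendantsAt (G : SimpleGraph V) (r a : V) (j : ℕ) : Finset V :=
  univ.filter fun y => G.dist r y = G.dist r a + j ∧ (treeParent G r)^[j] y = a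

lemma ncard_neighborSet_eq_degree (v : V) : (G.neighborSet v).ncard = G.degree v := by
  rw [Set.ncard_eq_toFinset_card', Set.toFinset_card, card_neighborSet_eq_degree]

lemma mem_descendantsAt {r a y : V} {j : ℕ} :
    y ∈ descendantsAt G r a j ↔ G.dist r y = G.dist r a + j ∧ (treeParent G r)^[j] y = a := by
  simp [descendantsAt]

lemma card_treeChildren_root (r : V) : #(treeChildren G r r) = G.degree r := by
  rw [treeChildren, treeParent_root, erase_eq_of_notMem (by simp), card_neighborFinset_eq_degree]

lemma descendantsAt_zero (r a : V) : descendantsAt G r a 0 = {a} := by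
  ext y
  simp only [mem_descendantsAt, add_zero, Function.iterate_zero, id_eq, mem_singleton]
  exact ⟨And.right, fun h => ⟨h ▸ rfl, h⟩⟩

namespace IsTree

variable (hG : G.IsTree) (r : V) {x y : V}
include hG

lemma mem_treeChildren : y ∈ treeChildren G r x ↔ y ≠ r ∧ treeParent G r y = x := by
  rw [treeChildren, mem_erase, mem_neighborFinset]
  constructor
  · rintro ⟨hne, hadj⟩
    rcases hG.eq_treeParent_or_eq_treeParent r hadj with h | h
    · exact absurd h hne
    · refine ⟨?_, h.symm⟩
      rintro rfl
      exact hadj.ne (by simpa using h)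
  · rintro ⟨hy, rfl⟩
    obtain ⟨hadj, hd⟩ := hG.adj_treeParent r hy
    refine ⟨fun h => ?_, hadj.symm⟩
    have := hG.dist_treeParent r (treeParent G r y)
    rw [← h] at this
    omega

lemma dist_of_mem_treeChildren (hy : y ∈ treeChildren G r x) : G.dist r y = G.dist r x + 1 := by
  obtain ⟨hyr, rfl⟩ := (hG.mem_treeChildren r).1 hy
  exact (hG.adj_treeParent r hyr).2.symm

lemma card_treeChildren (hx : x ≠ r) : #(treeChildren G r x) = G.degree x - 1 := by
  rw [treeChildren, card_erase_of_mem (mem_neighborFinset _ _ _ |>.2 (hG.adj_treeParent r hx).1),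
    card_neighborFinset_eq_degree]

lemma degree_eq_one_of_forall_dist_le (hx : x ≠ r) (hmax : ∀ y, G.dist r y ≤ G.dist r x) :
    G.degree x = 1 := by
  have hempty : treeChildren G r x = ∅ := by
    refine eq_empty_of_forall_notMem fun y hy => ?_
    have := hG.dist_of_mem_treeChildren r hy
    have := hmax y
    omega
  have hpos : 0 < G.degree x :=
    G.degree_pos_iff_exists_adj x |>.2 ⟨_, (hG.adj_treeParent r hx).1⟩
  have := hG.card_treeChildren r hx
  rw [hempty, card_empty] at this
  omega

lemma mem_descendantsAt_succ {a : V} {j : ℕ} :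
    y ∈ descendantsAt G r a (j + 1) ↔
      y ≠ r ∧ treeParent G r y ∈ descendantsAt G r a j := by
  rw [mem_descendantsAt, mem_descendantsAt, Function.iterate_succ_apply]
  constructor
  · rintro ⟨hd, hj⟩
    have hy : y ≠ r := by rintro rfl; simp at hd
    have := (hG.adj_treeParent r hy).2
    exact ⟨hy, by omega, hj⟩
  · rintro ⟨hy, hd, hj⟩
    have := (hG.adj_treeParent r hy).2
    exact ⟨by omega, hj⟩

lemma descendantsAt_root (k : ℕ) :
    descendantsAt G r r k = univ.filter fun y => G.dist r y = k := by
  ext y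
  simp only [mem_descendantsAt, Finset.mem_filter, mem_univ, true_and, dist_self, zero_add]
  exact ⟨And.left, fun h => ⟨h, hG.iterate_treeParent_of_dist_le r h.le⟩⟩

lemma card_descendantsAt_succ (a : V) (j : ℕ) :
    #(descendantsAt G r a (j + 1)) = ∑ x ∈ descendantsAt G r a j, #(treeChildren G r x) := by
  rw [card_eq_sum_card_fiberwise (f := treeParent G r) (t := descendantsAt G r a j)
    fun y hy => ((hG.mem_descendantsAt_succ r).1 hy).2]
  refine sum_congr rfl fun x hx => congrArg card ?_
  ext y
  rw [mem_filter, hG.mem_descendantsAt_succ r, hG.mem_treeChildren r]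
  constructor
  · rintro ⟨⟨hy, -⟩, rfl⟩
    exact ⟨hy, rfl⟩
  · rintro ⟨hy, rfl⟩
    exact ⟨⟨hy, hx⟩, rfl⟩

end IsTree

noncomputable def someGrandchild (G : SimpleGraph V) (r g : V) : V :=
  if h : (descendantsAt G r g 2).Nonempty then h.choose else g

noncomputable def grandchildSelection (G : SimpleGraph V) (r : V) (d : ℕ) : Finset V :=
  (descendantsAt G r r (d - 2)).image (someGrandchild G r)

end Finite

end SimpleGraph

lemma sum_comp_le_of_card_fiber_le {ι κ : Type*} [DecidableEq κ] {s : Finset ι} {t : Finset κ}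
    {f : ι → κ} {w : κ → ℝ} {c : κ → ℕ} (hf : ∀ i ∈ s, f i ∈ t)
    (hc : ∀ k ∈ t, #{i ∈ s | f i = k} ≤ c k)
    (hw : ∀ k ∈ t, 0 ≤ w k) :
    ∑ i ∈ s, w (f i) ≤ ∑ k ∈ t, (c k : ℝ) * w k := by
  rw [← sum_fiberwise_of_maps_to hf]
  refine sum_le_sum fun k hk => ?_
  rw [sum_congr rfl fun i hi => by rw [(Finset.mem_filter.1 hi).2], sum_const, nsmul_eq_mul]
  exact mul_le_mul_of_nonneg_right (by exact_mod_cast hc k hk) (hw k hk)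

lemma sum_Icc_geometric (n : ℕ) :
    ∑ m ∈ Icc 3 (n + 2), (4 * 3 ^ (m - 3) : ℝ) * (2 * (1 / 2) ^ (2 * m - 1)) =
      1 - (3 / 4) ^ n := by
  induction n with
  | zero => simp
  | succ n ih =>
    rw [show n + 1 + 2 = n + 2 + 1 by ring, sum_Icc_succ_top (by omega), ih,
      show n + 2 + 1 - 3 = n by omega, show 2 * (n + 2 + 1) - 1 = 2 * n + 5 by omega,
      pow_add, pow_mul, pow_succ]
    norm_num [div_pow]
    ring

lemma expW_le_sum_pow_dist {V : Type*} (G : SimpleGraph V) (S : Finset V) (u : V) :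
    expW G S u ≤ ∑ v ∈ S, 2 * (1 / 2 : ℝ) ^ G.dist u v := by
  refine sum_le_sum fun v _ => ?_
  split_ifs with htop
  · positivity
  · refine mul_le_mul_of_nonneg_left (pow_le_pow_of_le_one (by norm_num) (by norm_num) ?_)
      zero_le_two
    exact ENat.toNat_le_toNat (edist_anti fun _ _ h => h.1) htop

lemma le_expIndepNum {V : Type*} [Fintype V] {G : SimpleGraph V} {S : Finset V}
    (hS : ExpIndep G S) : #S ≤ expIndepNum V G :=
  le_csSup ⟨Fintype.card V, by rintro _ ⟨T, -, rfl⟩; exact card_le_univ T⟩ ⟨S, hS, rfl⟩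

namespace IsTreeTDelta

variable {V : Type*} {G : SimpleGraph V} {r : V} {Δ d : ℕ} (hT : IsTreeTDelta G r Δ d)
include hT

lemma isTree : G.IsTree := ⟨hT.1, hT.2.1⟩

variable [Fintype V]

lemma dist_eq_of_degree_eq_one {v : V} (h : G.degree v = 1) : G.dist r v = d := by
  rw [SimpleGraph.dist, hT.2.2.1 v (by rwa [ncard_neighborSet_eq_degree]), ENat.toNat_natCast]

lemma degree_eq_of_degree_ne_one {v : V} (h : G.degree v ≠ 1) : G.degree v = Δ := by
  have := hT.2.2.2 v (by rwa [ncard_neighborSet_eq_degree])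
  rwa [ncard_neighborSet_eq_degree] at this

lemma dist_le (v : V) : G.dist r v ≤ d := by
  obtain ⟨x, -, hx⟩ := exists_max_image univ (G.dist r) ⟨r, mem_univ r⟩
  refine (hx v (mem_univ v)).trans ?_
  rcases eq_or_ne x r with rfl | hxr
  · simp
  · exact (hT.dist_eq_of_degree_eq_one <|
      hT.isTree.degree_eq_one_of_forall_dist_le r hxr fun y => hx y (mem_univ y)).le

lemma card_treeChildren_root (hd : 0 < d) : #(treeChildren G r r) = Δ := by
  rw [SimpleGraph.card_treeChildren_root]
  refine hT.degree_eq_of_degree_ne_one fun h => ?_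
  have := hT.dist_eq_of_degree_eq_one h
  simp only [dist_self] at this
  omega

lemma card_treeChildren_of_dist_lt {x : V} (hx : x ≠ r) (hxd : G.dist r x < d) :
    #(treeChildren G r x) = Δ - 1 := by
  rw [hT.isTree.card_treeChildren r hx, hT.degree_eq_of_degree_ne_one]
  intro h
  have := hT.dist_eq_of_degree_eq_one h
  omega

lemma card_treeChildren_le {x : V} (hx : x ≠ r) : #(treeChildren G r x) ≤ Δ - 1 := by
  rw [hT.isTree.card_treeChildren r hx]
  by_cases h : G.degree x = 1
  · omega
  · rw [hT.degree_eq_of_degree_ne_one h]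

lemma card_treeChildren_le_of_pos (hd : 0 < d) (x : V) : #(treeChildren G r x) ≤ Δ := by
  rcases eq_or_ne x r with rfl | hx
  · exact (hT.card_treeChildren_root hd).le
  · exact (hT.card_treeChildren_le hx).trans (Nat.sub_le _ _)

lemma card_descendantsAt_succ_of_lt {a : V} {j : ℕ} (hj : G.dist r a + j < d) :
    #(descendantsAt G r a (j + 1)) = #(treeChildren G r a) * (Δ - 1) ^ j := by
  induction j with
  | zero => simp [hT.isTree.card_descendantsAt_succ r, descendantsAt_zero]
  | succ j ih =>
    rw [hT.isTree.card_descendantsAt_succ r, sum_const_nat (m := Δ - 1), ih (by omega), pow_succ,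
      mul_assoc]
    intro x hx
    have hxd := (mem_descendantsAt.1 hx).1
    exact hT.card_treeChildren_of_dist_lt (by rintro rfl; simp at hxd) (by omega)

lemma card_descendantsAt_succ_le (a : V) (j : ℕ) :
    #(descendantsAt G r a (j + 1)) ≤ #(treeChildren G r a) * (Δ - 1) ^ j := by
  induction j with
  | zero => simp [hT.isTree.card_descendantsAt_succ r, descendantsAt_zero]
  | succ j ih =>
    rw [hT.isTree.card_descendantsAt_succ r, pow_succ, ← mul_assoc]
    refine (sum_le_card_nsmul _ _ (Δ - 1) fun x hx => hT.card_treeChildren_le ?_).trans ?_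
    · have hxd := (mem_descendantsAt.1 hx).1
      rintro rfl
      simp at hxd
    · exact Nat.mul_le_mul_right _ ih

lemma card_descendantsAt_root {k : ℕ} (hk : 0 < k) (hkd : k ≤ d) :
    #(descendantsAt G r r k) = Δ * (Δ - 1) ^ (k - 1) := by
  obtain ⟨j, rfl⟩ := Nat.exists_eq_add_of_lt hk
  rw [hT.card_descendantsAt_succ_of_lt (by simp; omega), hT.card_treeChildren_root (by omega)]
  simp

lemma card_eq : Fintype.card V = 1 + ∑ k ∈ range d, Δ * (Δ - 1) ^ k := by
  rw [← card_univ, card_eq_sum_card_fiberwise (f := G.dist r) (t := range (d + 1))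
    fun v _ => mem_range.2 (Nat.lt_succ_of_le (hT.dist_le v)), sum_range_succ', add_comm]
  simp only [← hT.isTree.descendantsAt_root r, descendantsAt_zero, card_singleton]
  congr 1
  exact sum_congr rfl fun k hk =>
    (hT.card_descendantsAt_root k.succ_pos (mem_range.1 hk)).trans (by simp)

section Selection

variable (hΔ : 2 ≤ Δ) (hd : 3 ≤ d)
include hΔ

lemma someGrandchild_mem {g : V} (hg : g ≠ r) (hgd : G.dist r g + 2 ≤ d) :
    someGrandchild G r g ∈ descendantsAt G r g 2 := by
  have hne : (descendantsAt G r g 2).Nonempty := by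
    rw [← card_pos, hT.card_descendantsAt_succ_of_lt (by omega),
      hT.card_treeChildren_of_dist_lt hg (by omega)]
    exact Nat.mul_pos (by omega) (pow_pos (by omega) _)
  rw [someGrandchild, dif_pos hne]
  exact hne.choose_spec

include hd

lemma someGrandchild_spec {g : V} (hg : g ∈ descendantsAt G r r (d - 2)) :
    G.dist r (someGrandchild G r g) = d ∧ (treeParent G r)^[2] (someGrandchild G r g) = g := by
  have hgd : G.dist r g = d - 2 := by simpa using (mem_descendantsAt.1 hg).1
  have hgr : g ≠ r := by rintro rfl; simp at hgd; omega
  obtain ⟨hdist, hpar⟩ := mem_descendantsAt.1 (hT.someGrandchild_mem hΔ hgr (by omega))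
  exact ⟨by omega, hpar⟩

lemma mem_grandchildSelection {u : V} (hu : u ∈ grandchildSelection G r d) :
    G.dist r u = d ∧ someGrandchild G r ((treeParent G r)^[2] u) = u := by
  obtain ⟨g, hg, rfl⟩ := mem_image.1 hu
  obtain ⟨hdist, hpar⟩ := hT.someGrandchild_spec hΔ hd hg
  exact ⟨hdist, by rw [hpar]⟩

lemma card_grandchildSelection : #(grandchildSelection G r d) = Δ * (Δ - 1) ^ (d - 3) := by
  rw [grandchildSelection, card_image_of_injOn, hT.card_descendantsAt_root (by omega) (by omega)]
  · rfl
  · intro g hg g' hg' h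
    rw [← (hT.someGrandchild_spec hΔ hd hg).2, h, (hT.someGrandchild_spec hΔ hd hg').2]

lemma three_le_meetHeight {u v : V} (hu : u ∈ grandchildSelection G r d)
    (hv : v ∈ grandchildSelection G r d) (huv : u ≠ v) : 3 ≤ meetHeight G r u v := by
  obtain ⟨hud, hus⟩ := hT.mem_grandchildSelection hΔ hd hu
  obtain ⟨hvd, hvs⟩ := hT.mem_grandchildSelection hΔ hd hv
  by_contra! h
  rw [← hus, ← hvs, hT.isTree.iterate_treeParent_eq_of_meetHeight_le r (hud.trans hvd.symm)
    (by omega : meetHeight G r u v ≤ 2)] at huv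
  exact huv rfl

lemma card_filter_meetHeight_le {u : V} (hu : u ∈ grandchildSelection G r d) {m : ℕ}
    (hm : 3 ≤ m) :
    #{v ∈ grandchildSelection G r d | meetHeight G r u v = m} ≤ Δ * (Δ - 1) ^ (m - 3) := by
  obtain ⟨hud, -⟩ := hT.mem_grandchildSelection hΔ hd hu
  calc #{v ∈ grandchildSelection G r d | meetHeight G r u v = m}
      ≤ #(descendantsAt G r ((treeParent G r)^[m] u) (m - 3 + 1)) := by
        refine card_le_card_of_injOn ((treeParent G r)^[2]) (fun v hv => ?_) fun v hv w hw h => ?_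
        · obtain ⟨hvS, hvm⟩ := Finset.mem_filter.1 hv
          have huv := hud.trans (hT.mem_grandchildSelection hΔ hd hvS).1.symm
          have hmd := hT.isTree.meetHeight_le r huv
          rw [mem_coe, mem_descendantsAt, hT.isTree.dist_iterate_treeParent,
            hT.isTree.dist_iterate_treeParent,
            ← Function.iterate_add_apply, show m - 3 + 1 + 2 = m by omega]
          exact ⟨by omega, (hT.isTree.iterate_treeParent_eq_of_meetHeight_le r huv hvm.le).symm⟩
        · rw [← (hT.mem_grandchildSelection hΔ hd (Finset.mem_filter.1 hv).1).2, h,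
            (hT.mem_grandchildSelection hΔ hd (Finset.mem_filter.1 hw).1).2]
    _ ≤ #(treeChildren G r ((treeParent G r)^[m] u)) * (Δ - 1) ^ (m - 3) :=
        hT.card_descendantsAt_succ_le _ _
    _ ≤ Δ * (Δ - 1) ^ (m - 3) :=
        Nat.mul_le_mul_right _ (hT.card_treeChildren_le_of_pos (by omega) _)

theorem expIndep_grandchildSelection (hΔ4 : Δ ≤ 4) :
    ExpIndep G (grandchildSelection G r d) := by
  intro u hu
  set S := grandchildSelection G r d
  have hud := (hT.mem_grandchildSelection hΔ hd hu).1
  have hdepth : ∀ v ∈ S.erase u, G.dist r u = G.dist r v := fun v hv =>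
    hud.trans (hT.mem_grandchildSelection hΔ hd (mem_of_mem_erase hv)).1.symm
  calc expW G (S.erase u) u
      ≤ ∑ v ∈ S.erase u, 2 * (1 / 2 : ℝ) ^ G.dist u v := expW_le_sum_pow_dist G _ u
    _ ≤ ∑ v ∈ S.erase u, 2 * (1 / 2 : ℝ) ^ (2 * meetHeight G r u v - 1) := by
        refine sum_le_sum fun v hv => mul_le_mul_of_nonneg_left
          (pow_le_pow_of_le_one (by norm_num) (by norm_num) ?_) zero_le_two
        have := hT.isTree.two_mul_meetHeight_le r (hdepth v hv)
        omega
    _ ≤ ∑ m ∈ Icc 3 d, ((4 * 3 ^ (m - 3) : ℕ) : ℝ) * (2 * (1 / 2) ^ (2 * m - 1)) := by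
        refine sum_comp_le_of_card_fiber_le (f := meetHeight G r u)
          (w := fun m => 2 * (1 / 2 : ℝ) ^ (2 * m - 1)) (c := fun m => 4 * 3 ^ (m - 3))
          (fun v hv => ?_) (fun m hm => ?_) fun m _ => by positivity
        · have := hT.three_le_meetHeight hΔ hd hu (mem_of_mem_erase hv) (ne_of_mem_erase hv).symm
          have := hT.isTree.meetHeight_le r (hdepth v hv)
          exact mem_Icc.2 ⟨by omega, by omega⟩
        · calc _ ≤ #{v ∈ S | meetHeight G r u v = m} :=
                card_le_card (filter_subset_filter _ (erase_subset _ _))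
            _ ≤ Δ * (Δ - 1) ^ (m - 3) := hT.card_filter_meetHeight_le hΔ hd hu (mem_Icc.1 hm).1
            _ ≤ 4 * 3 ^ (m - 3) := Nat.mul_le_mul hΔ4 (Nat.pow_le_pow_left (by omega) _)
    _ < 1 := by
        push_cast
        rw [show d = d - 2 + 2 by omega, sum_Icc_geometric]
        have : (0 : ℝ) < (3 / 4) ^ (d - 2) := by positivity
        linarith

end Selection

end IsTreeTDelta

/-- For every integer `d ≥ 3`, the tree `T(4,d)` satisfies
`α_e(T(4,d)) ≥ (2/3³)·(n(T(4,d)) + 1)`. -/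
theorem stmt9 (d : ℕ) (hd : 3 ≤ d) :
    ∀ (V : Type) [Fintype V] (G : SimpleGraph V) (r : V),
      IsTreeTDelta G r 4 d →
      (2 / 3 ^ 3 : ℝ) * ((Fintype.card V : ℝ) + 1) ≤ (expIndepNum V G : ℝ) := by
  intro V _ G r hT
  have hS := le_expIndepNum (hT.expIndep_grandchildSelection (by norm_num) hd le_rfl)
  rw [hT.card_grandchildSelection (by norm_num) hd] at hS
  have hV : (Fintype.card V : ℝ) + 1 = 2 * 3 ^ d := by
    rw [hT.card_eq]
    push_cast
    rw [← mul_sum, geom_sum_eq (by norm_num)]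
    ring
  obtain ⟨k, rfl⟩ := Nat.exists_eq_add_of_le' hd
  rw [hV]
  calc (2 / 3 ^ 3 : ℝ) * (2 * 3 ^ (k + 3)) = ((4 * (4 - 1) ^ (k + 3 - 3) : ℕ) : ℝ) := by
        norm_num [pow_add]
        ring
    _ ≤ _ := by exact_mod_cast hS
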